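/- Let K be a finite-dimensional complex Hilbert space, |ψ⟩ ∈ K a unit vector, and let n, r be integers with 0 ≤ r ≤ n. If ρ_n ∈ D(K^{⊗n}) has its support contained in span V^n_r(K, |ψ⟩), then the sum of the single-site fidelities satisfies Σ_{i=1}^n ⟨ψ| (ρ_n)_{{i}} |ψ⟩ ≥ n − r, where (ρ_n)_{{i}} is the reduced state of ρ_n on the i-th tensor factor. -/

import Mathlib

/-!
Choose a unitary `u` whose `i₀`-th column is `ψ` and pass to the product basis `U = u^{⊗n}`, in
which every site projector `|ψ⟩⟨ψ|_i` is diagonal: the sum of the site fidelities becomes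
`Σ_y #{i | y i = i₀} σ_yy` with `σ = U† ρ U` again a state. A basis vector `U e_y` with fewer than
`n − r` entries `y i = i₀` is orthogonal to every `U_π(ψ^{⊗(n−r)} ⊗ ω)`, since one of the sites
carrying `ψ` contributes the factor `⟨u e_{y j}|ψ⟩ = 0`; hence it is orthogonal to the support of
`ρ`, and `σ_yy = 0`. The remaining diagonal weights are nonnegative, sum to one, and carry a
count of at least `n − r`.
-/

open scoped BigOperators ComplexOrder
open Filter Matrix

noncomputable section

namespace AlmostIID

/-- The trace norm `‖A‖₁ = Tr √(A†A)` of a square complex matrix. -/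
def traceNorm {m : Type*} [Fintype m] [DecidableEq m] (A : Matrix m m ℂ) : ℝ :=
  ((((Matrix.posSemidef_conjTranspose_mul_self A).isHermitian.eigenvectorUnitary : Matrix m m ℂ) *
    Matrix.diagonal (((↑) : ℝ → ℂ) ∘ Real.sqrt ∘
      (Matrix.posSemidef_conjTranspose_mul_self A).isHermitian.eigenvalues) *
    (star (Matrix.posSemidef_conjTranspose_mul_self A).isHermitian.eigenvectorUnitary :
      Matrix m m ℂ)).trace).re

/-- A density matrix (state): positive semidefinite with unit trace. -/
def IsState {m : Type*} [Fintype m] (M : Matrix m m ℂ) : Prop :=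
  M.PosSemidef ∧ M.trace = 1

/-- The marginal (reduced density matrix) of an `n`-partite operator on the
coordinates in `I`, i.e. the partial trace over the complement of `I`. -/
def marginal {κ : Type*} [Fintype κ] {n : ℕ}
    (M : Matrix (Fin n → κ) (Fin n → κ) ℂ) (I : Finset (Fin n)) :
    Matrix ({i : Fin n // i ∈ I} → κ) ({i : Fin n // i ∈ I} → κ) ℂ :=
  fun a b => ∑ f : {i : Fin n // i ∉ I} → κ,
    M (fun i => if h : i ∈ I then a ⟨i, h⟩ else f ⟨i, h⟩)
      (fun i => if h : i ∈ I then b ⟨i, h⟩ else f ⟨i, h⟩)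

/-- The single-site reduced density matrix on the `i`-th tensor factor. -/
def siteMarginal {κ : Type*} [Fintype κ] {n : ℕ}
    (M : Matrix (Fin n → κ) (Fin n → κ) ℂ) (i : Fin n) : Matrix κ κ ℂ :=
  fun a b => ∑ f : {j : Fin n // j ≠ i} → κ,
    M (fun j => if h : j = i then a else f ⟨j, h⟩)
      (fun j => if h : j = i then b else f ⟨j, h⟩)

/-- The i.i.d. product state `ρ^{⊗ι}` on the tensor factors indexed by `ι`. -/
def iidOn {κ : Type*} (ι : Type*) [Fintype ι] (ρ : Matrix κ κ ℂ) :
    Matrix (ι → κ) (ι → κ) ℂ :=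
  fun a b => ∏ i, ρ (a i) (b i)

/-- The product state `φ 0 ⊗ φ 1 ⊗ ⋯`. -/
def prodState {κ : Type*} {ι : Type*} [Fintype ι] (φ : ι → Matrix κ κ ℂ) :
    Matrix (ι → κ) (ι → κ) ℂ :=
  fun a b => ∏ i, φ i (a i) (b i)

/-- The quantum Wasserstein norm of order 1 of a difference of states:
the minimum of `Σ cᵢ` over decompositions `X = Σ cᵢ (τ⁽ⁱ⁾ − η⁽ⁱ⁾)` with `cᵢ ≥ 0`,
`τ⁽ⁱ⁾, η⁽ⁱ⁾` states with equal partial traces over the `i`-th factor. -/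
def W1 {κ : Type*} [Fintype κ] [DecidableEq κ] {n : ℕ}
    (X : Matrix (Fin n → κ) (Fin n → κ) ℂ) : ℝ :=
  sInf { w : ℝ |
    ∃ (c : Fin n → ℝ) (τ η : Fin n → Matrix (Fin n → κ) (Fin n → κ) ℂ),
      (∀ i, 0 ≤ c i) ∧ (∀ i, IsState (τ i)) ∧ (∀ i, IsState (η i)) ∧
      (∀ i, marginal (τ i) ({i}ᶜ : Finset (Fin n)) = marginal (η i) ({i}ᶜ : Finset (Fin n))) ∧
      X = ∑ i, c i • (τ i - η i) ∧ w = ∑ i, c i }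

/-- The local variation norm. -/
def LV {κ : Type*} [Fintype κ] [DecidableEq κ] {n : ℕ}
    (X : Matrix (Fin n → κ) (Fin n → κ) ℂ) : ℝ :=
  (1/2) * ∑ k ∈ Finset.Icc 1 n, ((2:ℝ)^k)⁻¹ *
    (((n.choose k : ℝ))⁻¹ *
      ∑ I ∈ Finset.powersetCard k (Finset.univ : Finset (Fin n)),
        traceNorm (marginal X I))


/-- The action of the permutation unitary `U_π` on a vector of `K^{⊗n}`. -/
def permVec {κ : Type*} {n : ℕ} (π : Equiv.Perm (Fin n)) (v : (Fin n → κ) → ℂ) :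
    (Fin n → κ) → ℂ :=
  fun x => v (fun i => x (π i))

/-- The vector `|ψ⟩^{⊗(n−r)} ⊗ |ω⟩` in `K^{⊗n}`. -/
def baseVec {κ : Type*} [Fintype κ] (n r : ℕ) (hrn : r ≤ n)
    (ψ : κ → ℂ) (ω : (Fin r → κ) → ℂ) : (Fin n → κ) → ℂ :=
  fun x => (∏ i : Fin (n - r), ψ (x (Fin.castLE (Nat.sub_le n r) i))) *
    ω (fun j => x ⟨n - r + j.val, by have := j.isLt; omega⟩)

/-- The set `V^n_r(K, |ψ⟩) = {U_π(|ψ⟩^{⊗(n−r)} ⊗ |ω⟩) : π ∈ S_n, |ω⟩ a unit vector of K^{⊗r}}`. -/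
def Vset {κ : Type*} [Fintype κ] (n r : ℕ) (hrn : r ≤ n) (ψ : κ → ℂ) :
    Set ((Fin n → κ) → ℂ) :=
  { v | ∃ (π : Equiv.Perm (Fin n)) (ω : (Fin r → κ) → ℂ),
      (∑ y, Complex.normSq (ω y)) = 1 ∧ v = permVec π (baseVec n r hrn ψ ω) }


theorem dotProduct_mulVec_eq_trace_mul_vecMulVec {κ R : Type*} [Fintype κ] [CommSemiring R]
    (m : Matrix κ κ R) (a b : κ → R) : a ⬝ᵥ (m *ᵥ b) = (m * vecMulVec b a).trace := by
  rw [mul_vecMulVec, trace_vecMulVec, dotProduct_comm]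

theorem mul_diagonal_single_mul_conjTranspose {κ : Type*} [Fintype κ] [DecidableEq κ]
    (u : Matrix κ κ ℂ) (i₀ : κ) :
    u * diagonal (Pi.single i₀ 1) * uᴴ = vecMulVec (fun a => u a i₀) (star fun a => u a i₀) := by
  ext a b
  simp [mul_apply, vecMulVec_apply, diagonal_apply, Pi.single_apply]

theorem exists_mem_unitaryGroup_apply_eq {κ : Type*} [Fintype κ] [DecidableEq κ] (ψ : κ → ℂ)
    (hψ : ∑ a, Complex.normSq (ψ a) = 1) (i₀ : κ) :
    ∃ u ∈ unitaryGroup κ ℂ, ∀ a, u a i₀ = ψ a := by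
  set v : EuclideanSpace ℂ κ := WithLp.toLp 2 ψ
  have hv : ‖v‖ = 1 := by
    simp [v, EuclideanSpace.norm_eq, ← Complex.normSq_eq_norm_sq, hψ]
  have hon : Orthonormal ℂ (({i₀} : Set κ).domRestrict fun _ => v) := by
    rw [orthonormal_iff_ite]
    intro i j
    simp [Subsingleton.elim i j, Set.domRestrict, hv]
  obtain ⟨b, hb⟩ := hon.exists_orthonormalBasis_extension_of_card_eq (by simp)
  refine ⟨(EuclideanSpace.basisFun κ ℂ).toBasis.toMatrix b,
    (EuclideanSpace.basisFun κ ℂ).toMatrix_orthonormalBasis_mem_unitary b, fun a => ?_⟩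
  simp [Module.Basis.toMatrix_apply, hb i₀ rfl, v]

theorem conjTranspose_mul_mul_apply_self_eq_zero {m l : Type*} [Fintype m] {ρ : Matrix m m ℂ}
    {W : Submodule ℂ (m → ℂ)} (hρ : LinearMap.range ρ.mulVecLin ≤ W) (A : Matrix m l ℂ) (y : l)
    (hy : ∀ w ∈ W, star (fun x => A x y) ⬝ᵥ w = 0) :
    (Aᴴ * ρ * A) y y = 0 := by
  have hquad : (Aᴴ * ρ * A) y y = star (fun x => A x y) ⬝ᵥ (ρ *ᵥ fun x => A x y) := by
    simp only [mul_apply, dotProduct, mulVec, conjTranspose_apply, Pi.star_apply,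
      Finset.sum_mul, Finset.mul_sum, mul_assoc]
    exact Finset.sum_comm
  exact hquad.trans (hy _ (hρ ⟨_, rfl⟩))

theorem natCast_mul_trace_re_le_sum_mul_diag_re {m : Type*} [Fintype m] {σ : Matrix m m ℂ}
    (hσ : σ.PosSemidef) (c : m → ℕ) (k : ℕ) (hσc : ∀ y, c y < k → σ y y = 0) :
    (k : ℝ) * σ.trace.re ≤ ∑ y, (c y : ℝ) * (σ y y).re := by
  rw [trace, Complex.re_sum, Finset.mul_sum]
  refine Finset.sum_le_sum fun y _ => ?_
  rcases lt_or_ge (c y) k with hy | hy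
  · simp [diag, hσc y hy]
  · exact mul_le_mul_of_nonneg_right (by exact_mod_cast hy)
      (Complex.nonneg_iff.mp hσ.diag_nonneg).1

theorem sum_mul_eq_zero_of_update_eq {ι κ R : Type*} [Fintype ι] [DecidableEq ι] [Fintype κ]
    [NonUnitalNonAssocSemiring R] (j : ι) {α : κ → R} (hα : ∑ b, α b = 0)
    {H : (ι → κ) → R} (hH : ∀ x b, H (Function.update x j b) = H x) :
    ∑ x, α (x j) * H x = 0 := by
  set e := (Equiv.funSplitAt j κ).symm
  rw [← e.sum_comp, Fintype.sum_prod_type, Finset.sum_comm]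
  refine Finset.sum_eq_zero fun f _ => ?_
  rcases isEmpty_or_nonempty κ with hκ | ⟨⟨b₀⟩⟩
  · simp
  have hHe : ∀ b, H (e (b, f)) = H (e (b₀, f)) := fun b => by
    rw [← hH (e (b₀, f)) b]
    congr 1
    funext k
    by_cases hk : k = j <;> simp [e, Equiv.funSplitAt_symm_apply, hk]
  simp [e, Equiv.funSplitAt_symm_apply, hHe, ← Finset.sum_mul, hα]

section ProdState

variable {ι κ : Type*} [Fintype ι]

theorem prodState_mul [DecidableEq ι] [Fintype κ] (φ χ : ι → Matrix κ κ ℂ) :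
    prodState φ * prodState χ = prodState (fun i => φ i * χ i) := by
  ext x y
  simp only [prodState, mul_apply, Fintype.prod_sum, Finset.prod_mul_distrib]

theorem conjTranspose_prodState (φ : ι → Matrix κ κ ℂ) :
    (prodState φ)ᴴ = prodState (fun i => (φ i)ᴴ) := by
  ext x y
  simp [prodState, conjTranspose_apply]

theorem prodState_diagonal [DecidableEq κ] (d : ι → κ → ℂ) :
    prodState (fun i => diagonal (d i)) = diagonal (fun x => ∏ i, d i (x i)) := by
  ext x y
  by_cases hxy : x = y
  · simp [prodState, hxy]
  · obtain ⟨i, hi⟩ := Function.ne_iff.mp hxy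
    simp only [prodState, diagonal_apply, hxy, if_false]
    exact Finset.prod_eq_zero (Finset.mem_univ i) (if_neg hi)

theorem prodState_one [DecidableEq κ] : prodState (fun _ : ι => (1 : Matrix κ κ ℂ)) = 1 := by
  simpa using prodState_diagonal (ι := ι) (fun _ _ => (1 : ℂ))

theorem prodState_mem_unitaryGroup [DecidableEq ι] [Fintype κ] [DecidableEq κ]
    {φ : ι → Matrix κ κ ℂ} (hφ : ∀ i, φ i ∈ unitaryGroup κ ℂ) :
    prodState φ ∈ unitaryGroup (ι → κ) ℂ := by
  rw [mem_unitaryGroup_iff, star_eq_conjTranspose, conjTranspose_prodState, prodState_mul]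
  simp_rw [← star_eq_conjTranspose, mem_unitaryGroup_iff.mp (hφ _), prodState_one]

theorem prodState_funSplitAt_symm [DecidableEq ι] (φ : ι → Matrix κ κ ℂ) (i : ι) (p q : κ)
    (f g : {j // j ≠ i} → κ) :
    prodState φ ((Equiv.funSplitAt i κ).symm (p, f)) ((Equiv.funSplitAt i κ).symm (q, g)) =
      φ i p q * prodState (fun j : {j // j ≠ i} => φ j) f g := by
  simp only [prodState, Fintype.prod_eq_mul_prod_subtype_ne _ i, Equiv.funSplitAt_symm_apply]
  exact congrArg _ (Finset.prod_congr rfl fun j _ => by simp [j.2])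

end ProdState

section SiteOperator

variable {ι κ : Type*} [Fintype ι] [DecidableEq ι] [DecidableEq κ]

/-- The operator `1 ⊗ ⋯ ⊗ a ⊗ ⋯ ⊗ 1`, acting as `a` on the `i`-th tensor factor. -/
def siteOperator (i : ι) (a : Matrix κ κ ℂ) : Matrix (ι → κ) (ι → κ) ℂ :=
  prodState (Function.update (fun _ => 1) i a)

theorem siteOperator_diagonal (i : ι) (d : κ → ℂ) :
    siteOperator i (diagonal d) = diagonal (fun y : ι → κ => d (y i)) := by
  have hsite : Function.update (fun _ => (1 : Matrix κ κ ℂ)) i (diagonal d) =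
      fun j => diagonal (Function.update (fun _ _ => (1 : ℂ)) i d j) := by
    funext j
    rcases eq_or_ne j i with rfl | hj
    · simp
    · simp [hj]
  rw [siteOperator, hsite, prodState_diagonal]
  congr 1
  funext y
  rw [Fintype.prod_eq_mul_prod_subtype_ne _ i, Function.update_self,
    Finset.prod_eq_one fun j _ => by simp [Function.update_of_ne j.2], mul_one]

theorem prodState_const_mul_siteOperator_mul_conjTranspose [Fintype κ] {u : Matrix κ κ ℂ}
    (hu : u ∈ unitaryGroup κ ℂ) (i : ι) (a : Matrix κ κ ℂ) :
    prodState (fun _ : ι => u) * siteOperator i a * (prodState fun _ : ι => u)ᴴ =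
      siteOperator i (u * a * uᴴ) := by
  have hsite : (fun j => u * Function.update (fun _ => (1 : Matrix κ κ ℂ)) i a j * uᴴ) =
      Function.update (fun _ => 1) i (u * a * uᴴ) := by
    funext j
    rcases eq_or_ne j i with rfl | hj
    · simp
    · simp [hj, ← star_eq_conjTranspose, mem_unitaryGroup_iff.mp hu]
  rw [siteOperator, conjTranspose_prodState, prodState_mul, prodState_mul]
  exact congrArg prodState hsite

end SiteOperator

section SiteMarginal

variable {κ : Type*} [Fintype κ] {n : ℕ}

theorem siteMarginal_apply (M : Matrix (Fin n → κ) (Fin n → κ) ℂ) (i : Fin n) (p q : κ) :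
    siteMarginal M i p q =
      ∑ f, M ((Equiv.funSplitAt i κ).symm (p, f)) ((Equiv.funSplitAt i κ).symm (q, f)) := by
  refine Finset.sum_congr rfl fun f _ => ?_
  congr 1 <;> funext j <;> simp [Equiv.funSplitAt_symm_apply]

theorem trace_siteMarginal_mul [DecidableEq κ] (M : Matrix (Fin n → κ) (Fin n → κ) ℂ)
    (i : Fin n) (a : Matrix κ κ ℂ) :
    (siteMarginal M i * a).trace = (M * siteOperator i a).trace := by
  set e := (Equiv.funSplitAt i κ).symm
  have hsite : ∀ p q f g, siteOperator i a (e (q, g)) (e (p, f)) =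
      a q p * if g = f then 1 else 0 := by
    intro p q f g
    have hrest : (fun j : {j // j ≠ i} => Function.update (fun _ => (1 : Matrix κ κ ℂ)) i a j) =
        fun _ => 1 := funext fun j => Function.update_of_ne j.2 _ _
    rw [siteOperator, prodState_funSplitAt_symm, Function.update_self, hrest, prodState_one,
      one_apply]
  simp only [trace, diag, mul_apply, siteMarginal_apply, ← e.sum_comp, Fintype.sum_prod_type,
    hsite, mul_ite, mul_zero, Finset.sum_ite_eq', Finset.mem_univ, if_true, Finset.sum_mul,
    mul_one]
  exact Finset.sum_congr rfl fun _ _ => Finset.sum_comm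

theorem sum_dotProduct_siteMarginal_mulVec [DecidableEq κ] (ρ : Matrix (Fin n → κ) (Fin n → κ) ℂ)
    {u : Matrix κ κ ℂ} (hu : u ∈ unitaryGroup κ ℂ) (i₀ : κ) :
    ∑ i, star (fun a => u a i₀) ⬝ᵥ (siteMarginal ρ i *ᵥ fun a => u a i₀) =
      ∑ y : Fin n → κ, ((Finset.univ.filter fun j => y j = i₀).card : ℂ) *
        ((prodState fun _ => u)ᴴ * ρ * prodState fun _ => u :
          Matrix (Fin n → κ) (Fin n → κ) ℂ) y y := by
  set U := prodState fun _ : Fin n => u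
  have hsite : ∀ i, star (fun a => u a i₀) ⬝ᵥ (siteMarginal ρ i *ᵥ fun a => u a i₀) =
      ∑ y : Fin n → κ, (if y i = i₀ then 1 else 0) * (Uᴴ * ρ * U) y y := by
    intro i
    rw [dotProduct_mulVec_eq_trace_mul_vecMulVec, trace_siteMarginal_mul,
      ← mul_diagonal_single_mul_conjTranspose,
      ← prodState_const_mul_siteOperator_mul_conjTranspose hu, siteOperator_diagonal,
      ← Matrix.mul_assoc, ← Matrix.mul_assoc, trace_mul_comm, ← Matrix.mul_assoc,
      ← Matrix.mul_assoc]
    simp only [trace, diag, mul_diagonal, Pi.single_apply, mul_comm]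
    rfl
  rw [Finset.sum_congr rfl fun i _ => hsite i, Finset.sum_comm]
  refine Finset.sum_congr rfl fun y _ => ?_
  rw [← Finset.sum_mul, Finset.sum_boole]

end SiteMarginal

section ProdVec

def prodVec {ι κ : Type*} [Fintype ι] (φ : ι → κ → ℂ) : (ι → κ) → ℂ :=
  fun x => ∏ i, φ i (x i)

theorem dotProduct_prodVec_eq_zero {ι κ : Type*} [Fintype ι] [DecidableEq ι] [Fintype κ]
    (j : ι) {φ : ι → κ → ℂ} {ψ : κ → ℂ} (hφ : star (φ j) ⬝ᵥ ψ = 0)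
    {v H : (ι → κ) → ℂ} (hv : ∀ x, v x = ψ (x j) * H x)
    (hH : ∀ x b, H (Function.update x j b) = H x) :
    star (prodVec φ) ⬝ᵥ v = 0 := by
  have hsplit : ∀ x, star (prodVec φ) x * v x =
      (star (φ j (x j)) * ψ (x j)) * (star (∏ k ∈ Finset.univ.erase j, φ k (x k)) * H x) := by
    intro x
    rw [Pi.star_apply, prodVec,
      ← Finset.mul_prod_erase _ (fun k => φ k (x k)) (Finset.mem_univ j), hv, star_mul']
    ring
  rw [dotProduct]
  simp only [hsplit]
  refine sum_mul_eq_zero_of_update_eq j hφ fun x b => ?_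
  rw [hH]
  congr 2
  exact Finset.prod_congr rfl fun k hk => by
    rw [Function.update_of_ne (Finset.ne_of_mem_erase hk)]

variable {κ : Type*} [Fintype κ] {n r : ℕ}

theorem dotProduct_prodVec_permVec (φ : Fin n → κ → ℂ) (π : Equiv.Perm (Fin n))
    (v : (Fin n → κ) → ℂ) :
    star (prodVec φ) ⬝ᵥ permVec π v = star (prodVec fun j => φ (π j)) ⬝ᵥ v := by
  refine Fintype.sum_equiv (Equiv.arrowCongr π.symm (Equiv.refl κ)) _ _ fun x => ?_
  simp only [Pi.star_apply, prodVec, permVec]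
  rw [← Equiv.prod_comp π]
  rfl

theorem baseVec_eq_mul (hrn : r ≤ n) (ψ : κ → ℂ) (ω : (Fin r → κ) → ℂ) (i₁ : Fin (n - r)) :
    ∃ H : (Fin n → κ) → ℂ,
      (∀ x b, H (Function.update x (Fin.castLE (Nat.sub_le n r) i₁) b) = H x) ∧
      ∀ x, baseVec n r hrn ψ ω x = ψ (x (Fin.castLE (Nat.sub_le n r) i₁)) * H x := by
  refine ⟨fun x => (∏ i ∈ Finset.univ.erase i₁, ψ (x (Fin.castLE (Nat.sub_le n r) i))) *
      ω (fun k => x ⟨n - r + k.val, by have := k.isLt; omega⟩), fun x b => ?_, fun x => ?_⟩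
  · beta_reduce
    congr 1
    · refine Finset.prod_congr rfl fun i hi => ?_
      rw [Function.update_of_ne ((Fin.castLE_injective _).ne (Finset.ne_of_mem_erase hi))]
    · congr 1
      funext k
      exact Function.update_of_ne (Fin.ne_of_val_ne (by simp only [Fin.val_castLE]; omega)) _ _
  · rw [baseVec, ← Finset.mul_prod_erase _ _ (Finset.mem_univ i₁), mul_assoc]

theorem dotProduct_prodVec_eq_zero_of_mem_span (hrn : r ≤ n) {ψ : κ → ℂ} {φ : Fin n → κ → ℂ}
    (hφ : (Finset.univ.filter fun j => star (φ j) ⬝ᵥ ψ ≠ 0).card < n - r)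
    {v : (Fin n → κ) → ℂ} (hv : v ∈ Submodule.span ℂ (Vset n r hrn ψ)) :
    star (prodVec φ) ⬝ᵥ v = 0 := by
  induction hv using Submodule.span_induction with
  | mem v hv =>
    obtain ⟨π, ω, -, rfl⟩ := hv
    obtain ⟨i₁, hi₁⟩ : ∃ i₁ : Fin (n - r),
        star (φ (π (Fin.castLE (Nat.sub_le n r) i₁))) ⬝ᵥ ψ = 0 := by
      by_contra! h
      refine hφ.not_ge (le_of_eq_of_le ?_ (Finset.card_le_card (s := Finset.univ.image
        fun i₁ : Fin (n - r) => π (Fin.castLE (Nat.sub_le n r) i₁)) ?_))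
      · rw [Finset.card_image_of_injective _ fun _ _ h => Fin.castLE_injective _ (π.injective h),
          Finset.card_univ, Fintype.card_fin]
      · intro j hj
        obtain ⟨i₁, -, rfl⟩ := Finset.mem_image.mp hj
        exact Finset.mem_filter.mpr ⟨Finset.mem_univ _, h i₁⟩
    obtain ⟨H, hH, hbase⟩ := baseVec_eq_mul hrn ψ ω i₁
    rw [dotProduct_prodVec_permVec]
    exact dotProduct_prodVec_eq_zero (φ := fun j => φ (π j)) _ hi₁ hbase hH
  | zero => exact dotProduct_zero _
  | add v w _ _ hv hw => rw [dotProduct_add, hv, hw, add_zero]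
  | smul c v _ hv => rw [dotProduct_smul, hv, smul_zero]

end ProdVec

/-- If `ρₙ` is supported in `span V^n_r(K, |ψ⟩)`, then the sum of the
single-site fidelities satisfies `Σᵢ ⟨ψ|(ρₙ)ᵢ|ψ⟩ ≥ n − r`. -/
theorem sum_site_fidelity_ge_of_supp_in_Vspan
    {D : ℕ} {n r : ℕ} (hrn : r ≤ n)
    (ψ : Fin D → ℂ) (hψ : (∑ x, Complex.normSq (ψ x)) = 1)
    (ρn : Matrix (Fin n → Fin D) (Fin n → Fin D) ℂ) (hρn : IsState ρn)
    (hsupp : LinearMap.range (Matrix.mulVecLin ρn) ≤ Submodule.span ℂ (Vset n r hrn ψ)) :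
    (n : ℝ) - (r : ℝ)
      ≤ ∑ i : Fin n, (dotProduct (star ψ) ((siteMarginal ρn i).mulVec ψ)).re := by
  obtain ⟨i₀, -⟩ := Finset.exists_ne_zero_of_sum_ne_zero (hψ ▸ one_ne_zero)
  obtain ⟨u, hu, hcol⟩ := exists_mem_unitaryGroup_apply_eq ψ hψ i₀
  obtain rfl : (fun a => u a i₀) = ψ := funext hcol
  set U := prodState fun _ : Fin n => u
  have hcols : ∀ b b', star (fun a => u a b) ⬝ᵥ (fun a => u a b') = (1 : Matrix _ _ ℂ) b b' := by
    intro b b'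
    rw [← mem_unitaryGroup_iff'.mp hu, mul_apply']
    rfl
  have hzero : ∀ y, (Finset.univ.filter fun j => y j = i₀).card < n - r →
      (Uᴴ * ρn * U) y y = 0 := fun y hy =>
    conjTranspose_mul_mul_apply_self_eq_zero hsupp U y fun w hw =>
      dotProduct_prodVec_eq_zero_of_mem_span hrn (φ := fun j a => u a (y j))
        (by simpa [hcols, one_apply] using hy) hw
  have hU : U * Uᴴ = 1 := mem_unitaryGroup_iff.mp (prodState_mem_unitaryGroup fun _ => hu)
  have htrace : (Uᴴ * ρn * U).trace = 1 := by
    rw [trace_mul_cycle, hU, Matrix.one_mul, hρn.2]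
  calc (n : ℝ) - r = ((n - r : ℕ) : ℝ) * (Uᴴ * ρn * U).trace.re := by
        rw [htrace, Complex.one_re, mul_one, Nat.cast_sub hrn]
    _ ≤ ∑ y : Fin n → Fin D,
          ((Finset.univ.filter fun j => y j = i₀).card : ℝ) * ((Uᴴ * ρn * U) y y).re :=
        natCast_mul_trace_re_le_sum_mul_diag_re (hρn.1.conjTranspose_mul_mul_same U) _ _ hzero
    _ = _ := by
        rw [← Complex.re_sum, sum_dotProduct_siteMarginal_mulVec ρn hu i₀, Complex.re_sum]
        simp only [Complex.mul_re, Complex.natCast_re, Complex.natCast_im, zero_mul, sub_zero]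
        rfl

end AlmostIID
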